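/- Fix q with 0 < q < 1/2 and ε with 0 < ε < 1/2, define φ(x) = x/(1 − e^{−qx}) − 2ε for x > 0 and φ(0) = 1/q − 2ε. Then φ has a unique fixed point x₀ > 1, φ is strictly increasing, and for all sufficiently small ε one has x₀ < (2/q) log(1/ε). -/

import Mathlib

/-- The function `φ(x) = x/(1 − e^{−qx}) − 2ε` for `x > 0`, extended continuously by
`φ(0) = 1/q − 2ε`. -/
noncomputable def phiFn (q ε x : ℝ) : ℝ :=
  if x = 0 then 1 / q - 2 * ε else x / (1 - Real.exp (-q * x)) - 2 * ε

/-!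
For `x > 0` one has `φ(x) = x/(1 - e^{-qx}) - 2ε` and `φ(x) - x = x/(e^{qx} - 1) - 2ε`; up to
the factor `1/q` both fractions are reciprocals of secant slopes of `exp` through `0` (at `-qx`
and at `qx`), so strict convexity of `exp` makes `φ` strictly increasing and `φ - id` strictly
decreasing on `[0, ∞)`. The fixed point is therefore the unique zero of `φ - id`, and it is
located by signs: `φ(1) - 1 > 0` because `e^q < 2`, and at `X = (2/q) log(1/ε)`, where
`e^{qX} = ε⁻²`, the sign of `φ(X) - X` is that of `ε log(1/ε) - q(1 - ε²)`, which is negative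
for small `ε`.
-/

open Real Set Filter Topology
lemma exp_sub_one_div_lt_exp_sub_one_div {u v : ℝ} (hu : u ≠ 0) (hv : v ≠ 0) (huv : u < v) :
    (exp u - 1) / u < (exp v - 1) / v := by
  simpa only [exp_zero, sub_zero] using
    strictConvexOn_exp.secant_strict_mono (mem_univ 0) (mem_univ u) (mem_univ v) hu hv huv

lemma one_sub_exp_neg_div_eq {t : ℝ} : (1 - exp (-t)) / t = (exp (-t) - 1) / -t := by
  rw [← neg_div_neg_eq, neg_sub]

lemma one_sub_exp_neg_pos {t : ℝ} (ht : 0 < t) : 0 < 1 - exp (-t) := by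
  linarith [exp_lt_one_iff.2 (neg_lt_zero.2 ht)]

lemma one_sub_exp_neg_lt_self {t : ℝ} (ht : t ≠ 0) : 1 - exp (-t) < t := by
  linarith [add_one_lt_exp (neg_ne_zero.2 ht)]

lemma strictAntiOn_one_sub_exp_neg_div :
    StrictAntiOn (fun t : ℝ => (1 - exp (-t)) / t) (Ioi 0) := by
  intro s hs t ht hst
  simp only [one_sub_exp_neg_div_eq]
  exact exp_sub_one_div_lt_exp_sub_one_div (neg_ne_zero.2 (ne_of_gt ht))
    (neg_ne_zero.2 (ne_of_gt hs)) (neg_lt_neg hst)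

lemma strictMonoOn_div_one_sub_exp_neg :
    StrictMonoOn (fun t : ℝ => t / (1 - exp (-t))) (Ioi 0) := by
  intro s hs t ht hst
  dsimp only
  rw [← one_div_div (1 - exp (-s)), ← one_div_div (1 - exp (-t))]
  exact one_div_lt_one_div_of_lt (div_pos (one_sub_exp_neg_pos ht) ht)
    (strictAntiOn_one_sub_exp_neg_div hs ht hst)

lemma one_lt_div_one_sub_exp_neg {t : ℝ} (ht : 0 < t) : 1 < t / (1 - exp (-t)) :=
  (one_lt_div (one_sub_exp_neg_pos ht)).2 (one_sub_exp_neg_lt_self ht.ne')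

lemma strictAntiOn_div_exp_mul_sub_one {q : ℝ} (hq : 0 < q) :
    StrictAntiOn (fun x : ℝ => x / (exp (q * x) - 1)) (Ioi 0) := by
  intro x hx y hy hxy
  have key : ∀ x : ℝ, 0 < x →
      x / (exp (q * x) - 1) = q⁻¹ / ((exp (q * x) - 1) / (q * x)) := by
    intro x hx
    have : q * x ≠ 0 := (mul_pos hq hx).ne'
    field_simp
  simp only [key x hx, key y hy]
  have hqx : 0 < q * x := mul_pos hq hx
  exact div_lt_div_of_pos_left (inv_pos.2 hq) (div_pos (by simpa using hqx) hqx)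
    (exp_sub_one_div_lt_exp_sub_one_div hqx.ne' (mul_pos hq hy).ne'
      (mul_lt_mul_of_pos_left hxy hq))

lemma div_exp_mul_sub_one_lt_inv {q x : ℝ} (hq : 0 < q) (hx : 0 < x) :
    x / (exp (q * x) - 1) < q⁻¹ := by
  have hqx : 0 < q * x := mul_pos hq hx
  rw [div_lt_iff₀ (by simpa using hqx), inv_mul_eq_div, lt_div_iff₀' hq]
  linarith [add_one_lt_exp hqx.ne']

lemma div_exp_mul_sub_one_lt_two_div {q x : ℝ} (hq : 0 < q) (hx : 0 < x) :
    x / (exp (q * x) - 1) < 2 / (q ^ 2 * x) := by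
  have hqx : 0 < q * x := mul_pos hq hx
  have hquad := quadratic_le_exp_of_nonneg hqx.le
  rw [div_lt_div_iff₀ (by simpa using hqx) (by positivity)]
  nlinarith

lemma phiFn_of_ne_zero {q ε x : ℝ} (hq : q ≠ 0) (hx : x ≠ 0) :
    phiFn q ε x = q⁻¹ * (q * x / (1 - exp (-(q * x)))) - 2 * ε := by
  rw [phiFn, if_neg hx, neg_mul, mul_div_assoc', inv_mul_cancel_left₀ hq]

lemma phiFn_sub_self {q ε x : ℝ} (hq : q ≠ 0) (hx : x ≠ 0) :
    phiFn q ε x - x = x / (exp (q * x) - 1) - 2 * ε := by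
  have hE : exp (q * x) - 1 ≠ 0 := by
    rw [sub_ne_zero, Ne, exp_eq_one_iff]; exact mul_ne_zero hq hx
  have h1 : 1 - exp (-(q * x)) = (exp (q * x) - 1) / exp (q * x) := by
    rw [exp_neg]; field_simp
  rw [phiFn, if_neg hx, neg_mul, h1]
  generalize exp (q * x) = E at hE ⊢
  field_simp
  ring

lemma strictMonoOn_phiFn {q : ℝ} (hq : 0 < q) (ε : ℝ) : StrictMonoOn (phiFn q ε) (Ici 0) := by
  intro a ha b hb hab
  have hb0 : 0 < b := lt_of_le_of_lt ha hab
  rw [phiFn_of_ne_zero hq.ne' hb0.ne']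
  rcases (mem_Ici.1 ha).eq_or_lt with rfl | ha0
  · rw [phiFn, if_pos rfl, one_div, sub_lt_sub_iff_right]
    exact lt_mul_of_one_lt_right (inv_pos.2 hq) (one_lt_div_one_sub_exp_neg (mul_pos hq hb0))
  · rw [phiFn_of_ne_zero hq.ne' ha0.ne', sub_lt_sub_iff_right]
    exact mul_lt_mul_of_pos_left (strictMonoOn_div_one_sub_exp_neg (mul_pos hq ha0)
      (mul_pos hq hb0) (mul_lt_mul_of_pos_left hab hq)) (inv_pos.2 hq)

lemma strictAntiOn_phiFn_sub_self {q : ℝ} (hq : 0 < q) (ε : ℝ) :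
    StrictAntiOn (fun x => phiFn q ε x - x) (Ici 0) := by
  intro a ha b hb hab
  have hb0 : 0 < b := lt_of_le_of_lt ha hab
  dsimp only
  rw [phiFn_sub_self hq.ne' hb0.ne']
  rcases (mem_Ici.1 ha).eq_or_lt with rfl | ha0
  · rw [phiFn, if_pos rfl, one_div, sub_zero, sub_lt_sub_iff_right]
    exact div_exp_mul_sub_one_lt_inv hq hb0
  · rw [phiFn_sub_self hq.ne' ha0.ne', sub_lt_sub_iff_right]
    exact strictAntiOn_div_exp_mul_sub_one hq ha0 hb0 hab

lemma exp_lt_two_of_lt_half {q : ℝ} (hq : q < 1 / 2) : exp q < 2 := by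
  rw [← lt_log_iff_exp_lt two_pos]
  linarith [log_two_gt_d9]

lemma phiFn_one_sub_one_pos {q ε : ℝ} (hq0 : 0 < q) (hq : q < 1 / 2) (hε : ε < 1 / 2) :
    0 < phiFn q ε 1 - 1 := by
  rw [phiFn_sub_self hq0.ne' one_ne_zero, mul_one, sub_pos,
    lt_div_iff₀ (by simpa using hq0)]
  nlinarith [exp_lt_two_of_lt_half hq, one_lt_exp_iff.2 hq0]

lemma exists_phiFn_eq_self {q ε : ℝ} (hq0 : 0 < q) (hq : q < 1 / 2) (hε : 0 < ε)
    (hε2 : ε < 1 / 2) : ∃ x, 0 ≤ x ∧ phiFn q ε x = x := by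
  set M := 1 / (q ^ 2 * ε) + 1
  have hM : 1 ≤ M := le_add_of_nonneg_left (by positivity)
  have hcont : ContinuousOn (fun x => x / (exp (q * x) - 1)) (Icc 1 M) := by
    refine continuousOn_id.div (by fun_prop) fun x hx => ?_
    rw [sub_ne_zero, Ne, exp_eq_one_iff]
    exact mul_ne_zero hq0.ne' (by linarith [hx.1])
  have hM_lt : M / (exp (q * M) - 1) < 2 * ε := by
    refine (div_exp_mul_sub_one_lt_two_div hq0 (by linarith)).trans ?_
    rw [div_lt_iff₀ (by positivity)]
    have : q ^ 2 * ε * (1 / (q ^ 2 * ε)) = 1 := mul_one_div_cancel (by positivity)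
    nlinarith [mul_pos (pow_pos hq0 2) hε]
  have h1_gt : 2 * ε < 1 / (exp (q * 1) - 1) := by
    have := phiFn_one_sub_one_pos hq0 hq hε2
    rwa [phiFn_sub_self hq0.ne' one_ne_zero, sub_pos] at this
  obtain ⟨x, hx, hFx⟩ := intermediate_value_Icc' hM hcont ⟨hM_lt.le, h1_gt.le⟩
  have hx0 : 0 < x := by linarith [hx.1]
  refine ⟨x, hx0.le, ?_⟩
  rw [← sub_eq_zero, phiFn_sub_self hq0.ne' hx0.ne']
  exact sub_eq_zero.2 hFx

lemma phiFn_sub_self_neg_of_negMulLog_lt {q ε : ℝ} (hq : 0 < q) (hε : 0 < ε) (hε1 : ε < 1)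
    (h : negMulLog ε < q * (1 - ε ^ 2)) :
    phiFn q ε (2 / q * log (1 / ε)) - 2 / q * log (1 / ε) < 0 := by
  have hlog : 0 < log (1 / ε) := log_pos ((one_lt_div hε).2 hε1)
  have hexp : exp (q * (2 / q * log (1 / ε))) = 1 / ε ^ 2 := by
    rw [← mul_assoc, mul_div_cancel₀ _ hq.ne', ← log_rpow (by positivity),
      exp_log (by positivity)]
    norm_num
  rw [phiFn_sub_self hq.ne' (by positivity), hexp, sub_neg]
  rw [negMulLog, neg_mul, ← mul_neg, ← log_inv, ← one_div] at h
  have hε2 : 0 < 1 - ε ^ 2 := by nlinarith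
  rw [div_lt_iff₀ (by rw [sub_pos, lt_div_iff₀ (by positivity)]; nlinarith)]
  field_simp
  nlinarith

lemma eventually_lt_one_and_negMulLog_lt {q : ℝ} (hq : 0 < q) :
    ∀ᶠ ε in 𝓝 0, ε < 1 ∧ negMulLog ε < q * (1 - ε ^ 2) := by
  refine (eventually_lt_nhds one_pos).and ?_
  refine (continuous_negMulLog.tendsto 0).eventually_lt ((by fun_prop : Continuous
    fun ε : ℝ => q * (1 - ε ^ 2)).tendsto 0) ?_
  simpa using hq

/-- Fix `0 < q < 1/2`.  For `0 < ε < 1/2`, the function `φ` is strictly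
increasing on `[0, ∞)`, has a unique nonnegative fixed point `x₀`, every such fixed point
exceeds `1`, and for all sufficiently small `ε` the fixed point satisfies
`x₀ < (2/q) log(1/ε)`. -/
theorem stmt17 (q : ℝ) (hq0 : 0 < q) (hq : q < 1 / 2) :
    (∀ ε : ℝ, 0 < ε → ε < 1 / 2 →
        StrictMonoOn (phiFn q ε) (Set.Ici 0)
        ∧ (∃! x₀ : ℝ, 0 ≤ x₀ ∧ phiFn q ε x₀ = x₀)
        ∧ ∀ x₀ : ℝ, 0 ≤ x₀ → phiFn q ε x₀ = x₀ → 1 < x₀)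
    ∧ ∃ η : ℝ, 0 < η ∧ ∀ ε : ℝ, 0 < ε → ε < η →
        ∀ x₀ : ℝ, 0 ≤ x₀ → phiFn q ε x₀ = x₀ →
          x₀ < (2 / q) * Real.log (1 / ε) := by
  have hgap := strictAntiOn_phiFn_sub_self hq0
  refine ⟨fun ε hε hε2 => ⟨strictMonoOn_phiFn hq0 ε, ?_, ?_⟩, ?_⟩
  · obtain ⟨x, hx, hfx⟩ := exists_phiFn_eq_self hq0 hq hε hε2
    refine ⟨x, ⟨hx, hfx⟩, fun y ⟨hy, hfy⟩ => (hgap ε).injOn hy hx ?_⟩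
    simp only [hfx, hfy, sub_self]
  · intro x hx hfx
    rw [← (hgap ε).lt_iff_gt hx (mem_Ici.2 zero_le_one), hfx, sub_self]
    exact phiFn_one_sub_one_pos hq0 hq hε2
  · obtain ⟨η, hη, hsmall⟩ :=
      Metric.eventually_nhds_iff.1 (eventually_lt_one_and_negMulLog_lt hq0)
    refine ⟨η, hη, fun ε hε hεη x hx hfx => ?_⟩
    obtain ⟨hε1, hneg⟩ := hsmall (by rwa [Real.dist_eq, sub_zero, abs_of_pos hε])
    have hX : 0 ≤ 2 / q * log (1 / ε) := by
      have := log_nonneg ((one_le_div hε).2 hε1.le)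
      positivity
    rw [← (hgap ε).lt_iff_gt hX hx, hfx, sub_self]
    exact phiFn_sub_self_neg_of_negMulLog_lt hq0 hε hε1 hneg
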